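/- Let f: ℝ → ℂ be continuous and integrable, and let f_i, f_j be nonzero real constants with f_i f_j > 0. Then lim_{ε→0⁺} ∫_{-∞}^∞ ∫_{-∞}^∞ f(s₀ - t₀) / ((t₀ + iε f_j)(s₀ + iε f_i)) dt₀ ds₀ = 0, i.e. when the iε shifts of the two real poles have the same sign, the iterated contour integral over t₀ (at fixed v = s₀ - t₀) vanishes. -/

import Mathlib

/-!
For `ε > 0` the double integral is already exactly `0`, with `a = iεf_j`, `b = iεf_i` in the same
open half-plane. Substituting `t₀ = s₀ - v` and swapping the integrals (Fubini applies because the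
integrand is bounded by `‖f v‖ (|s₀ - v + a|⁻² + |s₀ + b|⁻²)`) leaves, for each `v`, the integral
`∫ ds / ((s + a') (s + b))` with `a' = a - v` still in that half-plane. It vanishes because
`(b - a')⁻¹ log ((s + a') / (s + b))` (or `-(s + b)⁻¹` if `a' = b`) is a primitive tending to `0` at
both ends of the real line; the logarithm is holomorphic along the path since the quotient of two
points of the same open half-plane never lies on `(-∞, 0]`.
-/

open MeasureTheory Filter Complex Bornology Topology

lemma ofReal_add_ne_zero {a : ℂ} (ha : a.im ≠ 0) (t : ℝ) : (t : ℂ) + a ≠ 0 :=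
  fun h => ha (by simpa using congrArg im h)

lemma continuous_inv_ofReal_add {a : ℂ} (ha : a.im ≠ 0) :
    Continuous fun t : ℝ => ((t : ℂ) + a)⁻¹ :=
  (continuous_ofReal.add continuous_const).inv₀ (ofReal_add_ne_zero ha)

lemma memLp_two_inv_ofReal_add {a : ℂ} (ha : a.im ≠ 0) :
    MemLp (fun t : ℝ => ((t : ℂ) + a)⁻¹) 2 := by
  rw [memLp_two_iff_integrable_sq_norm (continuous_inv_ofReal_add ha).aestronglyMeasurable]
  refine (((integrable_inv_one_add_sq.comp_div ha).comp_add_right a.re).const_mul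
    (a.im ^ 2)⁻¹).congr (ae_of_all _ fun t => ?_)
  dsimp only
  rw [norm_inv, inv_pow, Complex.sq_norm, normSq_apply]
  simp only [add_re, ofReal_re, add_im, ofReal_im, zero_add]
  field_simp
  ring

lemma integrable_inv_ofReal_add_mul {a b : ℂ} (ha : a.im ≠ 0) (hb : b.im ≠ 0) :
    Integrable fun t : ℝ => ((t : ℂ) + a)⁻¹ * ((t : ℂ) + b)⁻¹ :=
  (memLp_two_inv_ofReal_add ha).integrable_mul (memLp_two_inv_ofReal_add hb)

lemma div_mem_slitPlane_of_im_mul_pos {z w : ℂ} (h : 0 < z.im * w.im) : z / w ∈ slitPlane := by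
  rw [mem_slitPlane_iff_not_le_zero, Complex.le_def]
  rintro ⟨hre, him⟩
  have hw : w ≠ 0 := by rintro rfl; simp at h
  have hz := congrArg im (div_mul_cancel₀ z hw)
  simp only [mul_im, zero_im, zero_re] at him hz hre
  rw [him, zero_mul, add_zero] at hz
  rw [← hz] at h
  nlinarith [mul_nonneg (neg_nonneg.2 hre) (sq_nonneg w.im)]

lemma tendsto_add_div_add_cobounded (a b : ℂ) :
    Tendsto (fun z : ℂ => (z + a) / (z + b)) (cobounded ℂ) (𝓝 1) := by
  have h : Tendsto (fun z : ℂ => 1 + (a - b) * (z + b)⁻¹) (cobounded ℂ) (𝓝 1) := by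
    simpa using tendsto_const_nhds.add
      (tendsto_const_nhds.mul (tendsto_inv₀_cobounded.comp (tendsto_add_const_cobounded b)))
  refine h.congr' ?_
  filter_upwards [(tendsto_add_const_cobounded b).eventually_ne_cobounded 0] with z hz
  field_simp
  ring

lemma hasDerivAt_log_add_div_add {a b : ℂ} (h : 0 < a.im * b.im) (t : ℝ) :
    HasDerivAt (fun t : ℝ => log (((t : ℂ) + a) / ((t : ℂ) + b)))
      ((b - a) * (((t : ℂ) + a)⁻¹ * ((t : ℂ) + b)⁻¹)) t := by
  have hlin (c : ℂ) : HasDerivAt (fun t : ℝ => (t : ℂ) + c) 1 t :=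
    (hasDerivAt_id t).ofReal_comp.add_const c
  have ha := ofReal_add_ne_zero (left_ne_zero_of_mul h.ne') t
  have hb := ofReal_add_ne_zero (right_ne_zero_of_mul h.ne') t
  refine (((hlin a).div (hlin b) hb).clog_real
    (div_mem_slitPlane_of_im_mul_pos (by simpa using h))).congr_deriv ?_
  simp only [Pi.div_apply]
  field_simp
  ring

lemma integral_inv_ofReal_add_mul_eq_zero {a b : ℂ} (h : 0 < a.im * b.im) :
    ∫ t : ℝ, ((t : ℂ) + a)⁻¹ * ((t : ℂ) + b)⁻¹ = 0 := by
  have ha := left_ne_zero_of_mul h.ne'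
  have hb := right_ne_zero_of_mul h.ne'
  have hcob {l : Filter ℝ} (hl : Tendsto ofReal l (cobounded ℂ)) (c : ℂ) :
      Tendsto (fun t : ℝ => (t : ℂ) + c) l (cobounded ℂ) :=
    (tendsto_add_const_cobounded c).comp hl
  suffices ∃ F : ℝ → ℂ, (∀ t : ℝ, HasDerivAt F (((t : ℂ) + a)⁻¹ * ((t : ℂ) + b)⁻¹) t) ∧
      ∀ l : Filter ℝ, Tendsto ofReal l (cobounded ℂ) → Tendsto F l (𝓝 0) by
    obtain ⟨F, hF, hlim⟩ := this
    simpa using integral_of_hasDerivAt_of_tendsto hF (integrable_inv_ofReal_add_mul ha hb)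
      (hlim _ (RCLike.tendsto_ofReal_atBot_cobounded ℂ))
      (hlim _ (RCLike.tendsto_ofReal_atTop_cobounded ℂ))
  rcases eq_or_ne a b with rfl | hab
  · refine ⟨fun t => -((t : ℂ) + a)⁻¹, fun t => ?_, fun l hl => ?_⟩
    · have := ofReal_add_ne_zero ha t
      refine (((hasDerivAt_id t).ofReal_comp.add_const a).inv this).neg.congr_deriv ?_
      simp only [id, ofReal_one]
      field_simp
    · simpa using (tendsto_inv₀_cobounded.comp (hcob hl a)).neg
  · have hba : b - a ≠ 0 := sub_ne_zero.mpr hab.symm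
    refine ⟨fun t => (b - a)⁻¹ * log (((t : ℂ) + a) / ((t : ℂ) + b)), fun t => ?_, fun l hl => ?_⟩
    · simpa [inv_mul_cancel_left₀ hba] using (hasDerivAt_log_add_div_add h t).const_mul (b - a)⁻¹
    · simpa using ((continuousAt_clog one_mem_slitPlane).tendsto.comp
        ((tendsto_add_div_add_cobounded a b).comp hl)).const_mul (b - a)⁻¹

section Convolution

variable {H : Type*} [AddGroup H] [MeasurableSpace H] [MeasurableAdd₂ H] [MeasurableNeg H]
  {μ : Measure H} [SFinite μ] [μ.IsAddRightInvariant]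

lemma integrable_mul_convolution_integrand_mul {f g h : H → ℂ} (hf : Integrable f μ)
    (hg : MemLp g 2 μ) (hh : MemLp h 2 μ) :
    Integrable (fun p : H × H => f p.2 * g (p.1 - p.2) * h p.1) (μ.prod μ) := by
  have hg2 := (memLp_two_iff_integrable_sq_norm hg.1).1 hg
  have hh2 := (memLp_two_iff_integrable_sq_norm hh.1).1 hh
  refine Integrable.mono'
    ((hf.norm.convolution_integrand (ContinuousLinearMap.mul ℝ ℝ) hg2).add (hh2.mul_prod hf.norm))
    ((hf.1.convolution_integrand (ContinuousLinearMap.mul ℂ ℂ) hg.1).mul hh.1.comp_fst)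
    (ae_of_all _ fun p => ?_)
  simp only [Pi.add_apply, ContinuousLinearMap.mul_apply', norm_mul]
  nlinarith [mul_nonneg (norm_nonneg (f p.2)) (sq_nonneg (‖g (p.1 - p.2)‖ - ‖h p.1‖)),
    mul_nonneg (mul_nonneg (norm_nonneg (f p.2)) (norm_nonneg (g (p.1 - p.2)))) (norm_nonneg (h p.1))]

end Convolution

theorem integral_integral_div_mul_eq_zero {f : ℝ → ℂ} (hf : Integrable f) {a b : ℂ}
    (h : 0 < a.im * b.im) :
    ∫ s : ℝ, ∫ t : ℝ, f (s - t) / (((t : ℂ) + a) * ((s : ℂ) + b)) = 0 := by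
  have ha := left_ne_zero_of_mul h.ne'
  have hb := right_ne_zero_of_mul h.ne'
  set G : ℝ → ℝ → ℂ := fun s v => f v * (((s - v : ℝ) : ℂ) + a)⁻¹ * ((s : ℂ) + b)⁻¹
  have hshear (s : ℝ) : ∫ t : ℝ, f (s - t) / (((t : ℂ) + a) * ((s : ℂ) + b)) = ∫ v, G s v := by
    rw [← integral_sub_left_eq_self (G s) volume s]
    refine integral_congr_ae (ae_of_all _ fun t => ?_)
    simp only [G, sub_sub_cancel, div_eq_mul_inv, mul_inv]
    ring
  have hG : Integrable (Function.uncurry G) (volume.prod volume) :=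
    integrable_mul_convolution_integrand_mul (g := fun t : ℝ => ((t : ℂ) + a)⁻¹)
      (h := fun s : ℝ => ((s : ℂ) + b)⁻¹) hf (memLp_two_inv_ofReal_add ha)
      (memLp_two_inv_ofReal_add hb)
  have hinner (v : ℝ) : ∫ s, G s v = 0 := by
    have hG_eq (s : ℝ) : G s v = f v * (((s : ℂ) + (a - v))⁻¹ * ((s : ℂ) + b)⁻¹) := by
      simp only [G, ofReal_sub]
      ring_nf
    simp_rw [hG_eq, integral_const_mul,
      integral_inv_ofReal_add_mul_eq_zero (by simpa using h : 0 < (a - v).im * b.im), mul_zero]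
  calc _ = ∫ s : ℝ, ∫ v : ℝ, G s v := by simp_rw [hshear]
    _ = ∫ v : ℝ, ∫ s : ℝ, G s v := integral_integral_swap hG
    _ = 0 := by simp [hinner]

theorem stmt7_general (f : ℝ → ℂ) (hf_int : Integrable f)
    (fi fj : ℝ) (hsign : 0 < fi * fj) :
    Tendsto (fun ε : ℝ =>
        ∫ s₀ : ℝ, ∫ t₀ : ℝ, f (s₀ - t₀) /
          (((t₀ : ℂ) + Complex.I * (ε : ℂ) * (fj : ℂ))
            * ((s₀ : ℂ) + Complex.I * (ε : ℂ) * (fi : ℂ))))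
      (nhdsWithin 0 (Set.Ioi 0)) (nhds 0) := by
  refine tendsto_const_nhds.congr' (eventually_nhdsWithin_of_forall fun ε (hε : 0 < ε) => ?_)
  have him : (I * ε * fj).im * (I * ε * fi).im = ε ^ 2 * (fi * fj) := by
    simp only [mul_im, mul_re, I_re, I_im, ofReal_re, ofReal_im, zero_mul, mul_zero, sub_self,
      one_mul, zero_add]
    ring
  exact (integral_integral_div_mul_eq_zero hf_int (him ▸ by positivity)).symm

/-- When the `iε` shifts of the two real poles have the same sign (`f_i f_j > 0`),
the iterated integral
`∫∫ f(s₀-t₀)/((t₀ + iε f_j)(s₀ + iε f_i)) dt₀ ds₀`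
tends to `0` as `ε → 0⁺`: both poles of the inner `t₀`-integral lie on the same
side of the real axis, so the contour can be closed in the empty half-plane. -/
theorem stmt7 (f : ℝ → ℂ) (hf_cont : Continuous f) (hf_int : Integrable f)
    (fi fj : ℝ) (hfi : fi ≠ 0) (hfj : fj ≠ 0) (hsign : 0 < fi * fj) :
    Tendsto (fun ε : ℝ =>
        ∫ s₀ : ℝ, ∫ t₀ : ℝ, f (s₀ - t₀) /
          (((t₀ : ℂ) + Complex.I * (ε : ℂ) * (fj : ℂ))
            * ((s₀ : ℂ) + Complex.I * (ε : ℂ) * (fi : ℂ))))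
      (nhdsWithin 0 (Set.Ioi 0)) (nhds 0) :=
  stmt7_general f hf_int fi fj hsign
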